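/- Let d_1,…,d_n be reals with d_1 = 1. Then for every 1 ≤ i ≤ n the full row sum of the matrix D satisfies Σ_{j=1}^{n} d_{ij} = 1 if i = 1 and Σ_{j=1}^{n} d_{ij} = 0 if i > 1. -/
import Mathlib


open Finset Matrix

/-- The matrix `D` with entries `d_{ij}`: `0` for `i < j`, `d_i` for `i = j`, and
`-d_j · (∏_{k=j+1}^{i-1} (1 - d_k)) · d_i` for `i > j`. -/
def Dmat (n : ℕ) (d : Fin n → ℝ) : Matrix (Fin n) (Fin n) ℝ :=
  Matrix.of fun i j =>
    if i < j then 0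
    else if i = j then d i
    else -(d j) * (∏ k ∈ Finset.Ioo j i, (1 - d k)) * d i

/-- Telescoping identity over naturals. -/
lemma tel (f : ℕ → ℝ) : ∀ m : ℕ,
    ∑ j ∈ Finset.range m, f j * ∏ k ∈ Finset.Ioo j m, (1 - f k)
      = 1 - ∏ k ∈ Finset.range m, (1 - f k) := by
  intro m
  induction m with
  | zero => simp
  | succ m ih =>
      rw [Finset.sum_range_succ, Finset.prod_range_succ]
      have h1 : Finset.Ioo m (m + 1) = (∅ : Finset ℕ) := by
        apply Finset.eq_empty_of_forall_notMem
        intro k hk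
        simp only [Finset.mem_Ioo] at hk
        omega
      have h2 : ∀ j ∈ Finset.range m,
          f j * ∏ k ∈ Finset.Ioo j (m + 1), (1 - f k)
            = (f j * ∏ k ∈ Finset.Ioo j m, (1 - f k)) * (1 - f m) := by
        intro j hj
        simp only [Finset.mem_range] at hj
        have : Finset.Ioo j (m + 1) = insert m (Finset.Ioo j m) := by
          ext k
          simp only [Finset.mem_Ioo, Finset.mem_insert]
          omega
        rw [this, Finset.prod_insert (by simp)]
        ring
      rw [Finset.sum_congr rfl h2, ← Finset.sum_mul, ih, h1]
      simp
      ring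

theorem stmt_2 (n : ℕ) (hn : 2 ≤ n) (d : Fin n → ℝ)
    (hd1 : d ⟨0, by omega⟩ = 1) :
    ∀ i : Fin n,
      ((i : ℕ) = 0 → ∑ j : Fin n, Dmat n d i j = 1) ∧
      (0 < (i : ℕ) → ∑ j : Fin n, Dmat n d i j = 0) := by
  intro i
  -- the ℕ-indexed version of d
  set e : ℕ → ℝ := fun k => if h : k < n then d ⟨k, h⟩ else 0 with he
  have hed : ∀ j : Fin n, e (j : ℕ) = d j := by
    intro j; simp [he, j.isLt]
  -- the ℕ-indexed version of the row i of Dmat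
  set g : ℕ → ℝ := fun m => if h : m < n then Dmat n d i ⟨m, h⟩ else 0 with hg
  have hsum : ∑ j : Fin n, Dmat n d i j = ∑ m ∈ Finset.range n, g m := by
    rw [← Fin.sum_univ_eq_sum_range g n]
    apply Finset.sum_congr rfl
    intro j _
    simp [hg, j.isLt]
  -- entries right of the diagonal vanish
  have hright : ∀ m ∈ Finset.Ico ((i : ℕ) + 1) n, g m = 0 := by
    intro m hm
    simp only [Finset.mem_Ico] at hm
    have hmn : m < n := hm.2
    have : i < (⟨m, hmn⟩ : Fin n) := by
      rw [Fin.lt_def]; simp; omega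
    simp [hg, hmn, Dmat, this]
  have hdiag : g (i : ℕ) = d i := by
    simp [hg, i.isLt, Dmat]
  have hleft : ∀ m ∈ Finset.range (i : ℕ),
      g m = -(e m) * (∏ k ∈ Finset.Ioo m (i : ℕ), (1 - e k)) * d i := by
    intro m hm
    simp only [Finset.mem_range] at hm
    have hmn : m < n := lt_trans hm i.isLt
    have h1 : ¬ (i < (⟨m, hmn⟩ : Fin n)) := by
      rw [Fin.lt_def]; simp; omega
    have h2 : i ≠ (⟨m, hmn⟩ : Fin n) := by
      intro h; rw [Fin.ext_iff] at h; simp at h; omega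
    have hprod : ∏ k ∈ Finset.Ioo (⟨m, hmn⟩ : Fin n) i, (1 - d k)
        = ∏ k ∈ Finset.Ioo m (i : ℕ), (1 - e k) := by
      rw [show Finset.Ioo m (i : ℕ)
            = (Finset.Ioo (⟨m, hmn⟩ : Fin n) i).map Fin.valEmbedding from
          (Fin.map_valEmbedding_Ioo (⟨m, hmn⟩ : Fin n) i).symm, Finset.prod_map]
      apply Finset.prod_congr rfl
      intro k _
      simp [hed]
    simp only [hg, hmn, dif_pos, Dmat, Matrix.of_apply, h1, h2, if_false]
    rw [hprod]
    congr 1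
    simp [he, hmn]
  -- split the sum
  have hsplit : Finset.range n =
      Finset.range ((i : ℕ) + 1) ∪ Finset.Ico ((i : ℕ) + 1) n := by
    ext k
    simp only [Finset.mem_range, Finset.mem_union, Finset.mem_Ico]
    have := i.isLt; omega
  have hdisj : Disjoint (Finset.range ((i : ℕ) + 1)) (Finset.Ico ((i : ℕ) + 1) n) := by
    rw [Finset.disjoint_left]
    intro k hk hk'
    simp only [Finset.mem_range] at hk
    simp only [Finset.mem_Ico] at hk'
    omega
  have hmain : ∑ j : Fin n, Dmat n d i j
      = d i - (∑ m ∈ Finset.range (i : ℕ), e m * ∏ k ∈ Finset.Ioo m (i : ℕ), (1 - e k)) * d i := by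
    rw [hsum, hsplit, Finset.sum_union hdisj, Finset.sum_range_succ,
      Finset.sum_eq_zero hright, Finset.sum_congr rfl hleft, hdiag, ← Finset.sum_mul]
    have : ∑ m ∈ Finset.range (i:ℕ), -e m * ∏ k ∈ Finset.Ioo m (i:ℕ), (1 - e k)
        = -(∑ m ∈ Finset.range (i:ℕ), e m * ∏ k ∈ Finset.Ioo m (i:ℕ), (1 - e k)) := by
      rw [← Finset.sum_neg_distrib]
      exact Finset.sum_congr rfl fun m _ => by ring
    rw [this]; ring
  constructor
  · intro hi0
    have hIio : Finset.range (i : ℕ) = ∅ := by rw [hi0]; rfl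
    have : ∑ j : Fin n, Dmat n d i j = d i := by
      rw [hmain, hIio]; simp
    rw [this]
    have : i = ⟨0, by omega⟩ := by rw [Fin.ext_iff]; exact hi0
    rw [this, hd1]
  · intro hi0
    rw [hmain, tel e (i : ℕ)]
    have h0 : e 0 = 1 := by
      simp only [he]
      rw [dif_pos (by omega : (0:ℕ) < n)]
      exact hd1
    have hprod0 : ∏ k ∈ Finset.range (i : ℕ), (1 - e k) = 0 := by
      apply Finset.prod_eq_zero (Finset.mem_range.mpr hi0)
      rw [h0]; ring
    rw [hprod0]
    ring
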